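/- The real subspace H = {α₀ρ⁺ + conj(α₀)ρ⁻ + α₁ε₁⁺ + conj(α₁)ε₁⁻ : α₀, α₁ ∈ ℂ} of Z is closed under the Zorn product and contains the unit 1 = ρ⁺ + ρ⁻; as a real algebra it is isomorphic to the Hamilton quaternions ℍ (in particular, every nonzero element of H is invertible in H). -/

import Mathlib

open Matrix

/-- 3-component complex vectors. -/
abbrev V3 := Fin 3 → ℂ

/-- The standard cross product on ℂ³. -/
def cross (A B : V3) : V3 := crossProduct A B

/-- The Zorn vector-matrix algebra over ℂ: elements x = (α⁺, A⁺, A⁻, α⁻). -/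
abbrev Zorn := ℂ × V3 × V3 × ℂ

/-- The Zorn product
x·y = (α⁺β⁺ − ⟨A⁺,B⁻⟩, α⁺B⁺ + β⁻A⁺ + A⁻×B⁻, β⁺A⁻ + α⁻B⁻ + A⁺×B⁺, α⁻β⁻ − ⟨A⁻,B⁺⟩). -/
noncomputable def zmul (x y : Zorn) : Zorn :=
  ( x.1 * y.1 - x.2.1 ⬝ᵥ y.2.2.1,
    x.1 • y.2.1 + y.2.2.2 • x.2.1 + cross x.2.2.1 y.2.2.1,
    y.1 • x.2.2.1 + x.2.2.2 • y.2.2.1 + cross x.2.1 y.2.1,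
    x.2.2.2 * y.2.2.2 - x.2.2.1 ⬝ᵥ y.2.1 )

/-- The unit 1 = (1,0,0,1) of the Zorn algebra. -/
noncomputable def zunit : Zorn := (1, 0, 0, 1)

/-- Membership in the sextonion subspace S : A⁺₃ = 0 and A⁻₂ = 0. -/
def inS (x : Zorn) : Prop := x.2.1 2 = 0 ∧ x.2.2.1 1 = 0

/-- The sextonion subspace S as a ℂ-submodule of the Zorn algebra. -/
noncomputable def Ssub : Submodule ℂ Zorn where
  carrier := {x | inS x}
  add_mem' := by
    rintro x y ⟨hx1, hx2⟩ ⟨hy1, hy2⟩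
    exact ⟨by simp [inS, Prod.fst_add, Prod.snd_add, Pi.add_apply, hx1, hy1],
           by simp [inS, Prod.fst_add, Prod.snd_add, Pi.add_apply, hx2, hy2]⟩
  zero_mem' := ⟨rfl, rfl⟩
  smul_mem' := by
    rintro c x ⟨hx1, hx2⟩
    exact ⟨by simp [inS, Prod.smul_fst, Prod.smul_snd, Pi.smul_apply, hx1],
           by simp [inS, Prod.smul_fst, Prod.smul_snd, Pi.smul_apply, hx2]⟩

/-- ρ⁺ = (1,0,0,0). -/
noncomputable def rhoP : Zorn := (1, 0, 0, 0)
/-- ρ⁻ = (0,0,0,1). -/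
noncomputable def rhoM : Zorn := (0, 0, 0, 1)
/-- ε_k⁺ = (0, e_k, 0, 0). -/
noncomputable def epsP (k : Fin 3) : Zorn := (0, Pi.single k 1, 0, 0)
/-- ε_k⁻ = (0, 0, e_k, 0). -/
noncomputable def epsM (k : Fin 3) : Zorn := (0, 0, Pi.single k 1, 0)

/-- Membership in the divisional quaternions H ⊂ Z:
H = {α₀ρ⁺ + conj(α₀)ρ⁻ + α₁ε₁⁺ + conj(α₁)ε₁⁻ : α₀, α₁ ∈ ℂ}. -/
noncomputable def inH (z : Zorn) : Prop :=
  ∃ a0 a1 : ℂ, z = a0 • rhoP + (starRingEnd ℂ a0) • rhoM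
    + a1 • epsP 0 + (starRingEnd ℂ a1) • epsM 0

/-!
Writing an element of `H` as `hElem a₀ a₁ = (a₀, a₁ e₁, conj a₁ e₁, conj a₀)`, the Zorn product
becomes the Cayley–Dickson product `(a₀, a₁)(b₀, b₁) = (a₀b₀ − a₁ conj b₁, a₀b₁ + conj b₀ a₁)`
on `ℂ × ℂ`: the cross products vanish because all vector parts are parallel to `e₁`.
This is the multiplication of `ℍ = ℂ ⊕ ℂj` under `q = (re + imI i) + (imJ + imK i) j`, so
`q ↦ hElem (re + imI i) (imJ + imK i)` is a real algebra isomorphism `ℍ ≃ H`, and inverses in `H`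
are the images of quaternion inverses.
-/

open ComplexConjugate

lemma cross_smul_smul_self (a b : ℂ) (v : V3) : cross (a • v) (b • v) = 0 := by
  simp [cross, cross_self]

lemma smul_single_dotProduct_smul_single {n : Type*} [Fintype n] [DecidableEq n] (i : n)
    (a b : ℂ) : (a • Pi.single i 1 : n → ℂ) ⬝ᵥ (b • Pi.single i 1) = a * b := by
  simp [dotProduct_smul, mul_comm]

noncomputable def hElem (a₀ a₁ : ℂ) : Zorn :=
  (a₀, a₁ • Pi.single 0 1, conj a₁ • Pi.single 0 1, conj a₀)

lemma hElem_eq_linear_combination (a₀ a₁ : ℂ) :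
    a₀ • rhoP + conj a₀ • rhoM + a₁ • epsP 0 + conj a₁ • epsM 0 = hElem a₀ a₁ := by
  simp [hElem, rhoP, rhoM, epsP, epsM]

lemma inH_iff_exists_hElem (z : Zorn) : inH z ↔ ∃ a₀ a₁ : ℂ, z = hElem a₀ a₁ := by
  simp only [inH, hElem_eq_linear_combination]

lemma inH_hElem (a₀ a₁ : ℂ) : inH (hElem a₀ a₁) :=
  (inH_iff_exists_hElem _).2 ⟨a₀, a₁, rfl⟩

lemma hElem_inj {a₀ a₁ b₀ b₁ : ℂ} : hElem a₀ a₁ = hElem b₀ b₁ ↔ a₀ = b₀ ∧ a₁ = b₁ := by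
  refine ⟨fun h => ?_, by rintro ⟨rfl, rfl⟩; rfl⟩
  simpa [hElem] using And.intro (congrArg Prod.fst h) (congrFun (congrArg (·.2.1) h) 0)

lemma hElem_add (a₀ a₁ b₀ b₁ : ℂ) :
    hElem (a₀ + b₀) (a₁ + b₁) = hElem a₀ a₁ + hElem b₀ b₁ := by
  simp [hElem, add_smul]

lemma hElem_ofReal_mul (r : ℝ) (a₀ a₁ : ℂ) :
    hElem (r * a₀) (r * a₁) = (r : ℂ) • hElem a₀ a₁ := by
  simp [hElem, mul_smul]

lemma zmul_hElem (a₀ a₁ b₀ b₁ : ℂ) :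
    zmul (hElem a₀ a₁) (hElem b₀ b₁)
      = hElem (a₀ * b₀ - a₁ * conj b₁) (a₀ * b₁ + conj b₀ * a₁) := by
  simp only [zmul, hElem, cross_smul_smul_self, smul_single_dotProduct_smul_single, add_zero,
    smul_smul, ← add_smul, map_sub, map_add, map_mul, Complex.conj_conj]
  rw [add_comm (b₀ * conj a₁)]

lemma inH_zmul {x y : Zorn} (hx : inH x) (hy : inH y) : inH (zmul x y) := by
  obtain ⟨a₀, a₁, rfl⟩ := (inH_iff_exists_hElem x).1 hx
  obtain ⟨b₀, b₁, rfl⟩ := (inH_iff_exists_hElem y).1 hy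
  rw [zmul_hElem]
  exact inH_hElem _ _

noncomputable def quaternionToZorn (q : Quaternion ℝ) : Zorn :=
  hElem ⟨q.re, q.imI⟩ ⟨q.imJ, q.imK⟩

lemma inH_quaternionToZorn (q : Quaternion ℝ) : inH (quaternionToZorn q) :=
  inH_hElem _ _

lemma quaternionToZorn_surjective_onto_inH {z : Zorn} (hz : inH z) :
    ∃ q, quaternionToZorn q = z := by
  obtain ⟨a₀, a₁, rfl⟩ := (inH_iff_exists_hElem z).1 hz
  exact ⟨⟨a₀.re, a₀.im, a₁.re, a₁.im⟩, rfl⟩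

lemma quaternionToZorn_injective : Function.Injective quaternionToZorn := by
  intro p q h
  obtain ⟨h₀, h₁⟩ := hElem_inj.1 h
  simp only [Complex.mk.injEq] at h₀ h₁
  exact Quaternion.ext _ _ h₀.1 h₀.2 h₁.1 h₁.2

lemma quaternionToZorn_add (p q : Quaternion ℝ) :
    quaternionToZorn (p + q) = quaternionToZorn p + quaternionToZorn q := by
  rw [quaternionToZorn, quaternionToZorn, quaternionToZorn, ← hElem_add]
  rfl

lemma quaternionToZorn_smul (r : ℝ) (q : Quaternion ℝ) :
    quaternionToZorn (r • q) = (r : ℂ) • quaternionToZorn q := by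
  rw [quaternionToZorn, quaternionToZorn, ← hElem_ofReal_mul]
  congr 1 <;> apply Complex.ext <;> simp

lemma quaternionToZorn_zero : quaternionToZorn 0 = 0 := by
  change hElem 0 0 = 0
  simp [hElem]

lemma quaternionToZorn_one : quaternionToZorn 1 = zunit := by
  change hElem 1 0 = zunit
  simp [hElem, zunit]

lemma quaternionToZorn_mul (p q : Quaternion ℝ) :
    quaternionToZorn (p * q) = zmul (quaternionToZorn p) (quaternionToZorn q) := by
  rw [quaternionToZorn, quaternionToZorn, quaternionToZorn, zmul_hElem]
  congr 1 <;> apply Complex.ext <;>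
    simp [Quaternion.re_mul, Quaternion.imI_mul, Quaternion.imJ_mul, Quaternion.imK_mul] <;> ring

lemma exists_zmul_inverse_of_inH {z : Zorn} (hz : inH z) (hz₀ : z ≠ 0) :
    ∃ w : Zorn, inH w ∧ zmul z w = zunit ∧ zmul w z = zunit := by
  obtain ⟨q, rfl⟩ := quaternionToZorn_surjective_onto_inH hz
  have hq : q ≠ 0 := by rintro rfl; exact hz₀ quaternionToZorn_zero
  refine ⟨quaternionToZorn q⁻¹, inH_quaternionToZorn _, ?_, ?_⟩
  · rw [← quaternionToZorn_mul, mul_inv_cancel₀ hq, quaternionToZorn_one]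
  · rw [← quaternionToZorn_mul, inv_mul_cancel₀ hq, quaternionToZorn_one]

/-- H is closed under the Zorn product, contains the unit
1 = ρ⁺ + ρ⁻, and as a real algebra it is isomorphic to the Hamilton quaternions ℍ
(in particular every nonzero element of H is invertible in H). -/
theorem H_is_hamilton_quaternions :
    (∀ x y : Zorn, inH x → inH y → inH (zmul x y)) ∧
    inH zunit ∧ zunit = rhoP + rhoM ∧
    (∃ f : Quaternion ℝ → Zorn,
      (∀ q, inH (f q)) ∧
      (∀ z : Zorn, inH z → ∃ q, f q = z) ∧
      Function.Injective f ∧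
      (∀ p q : Quaternion ℝ, f (p + q) = f p + f q) ∧
      (∀ (r : ℝ) (q : Quaternion ℝ), f (r • q) = (r : ℂ) • f q) ∧
      f 1 = zunit ∧
      (∀ p q : Quaternion ℝ, f (p * q) = zmul (f p) (f q))) ∧
    (∀ z : Zorn, inH z → z ≠ 0 →
      ∃ w : Zorn, inH w ∧ zmul z w = zunit ∧ zmul w z = zunit) := by
  refine ⟨fun _ _ => inH_zmul, ?_, ?_, ⟨quaternionToZorn, inH_quaternionToZorn,
    fun _ => quaternionToZorn_surjective_onto_inH, quaternionToZorn_injective,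
    quaternionToZorn_add, quaternionToZorn_smul, quaternionToZorn_one, quaternionToZorn_mul⟩,
    fun _ => exists_zmul_inverse_of_inH⟩
  · exact quaternionToZorn_one ▸ inH_quaternionToZorn 1
  · simp [zunit, rhoP, rhoM]
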